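/- For any complex numbers c₀ and c₁ with c₁ ≠ 0, the three-qubit state c₀|000⟩ + c₁(|100⟩ + |010⟩ + |001⟩) is SLOCC-equivalent to the W state |100⟩ + |010⟩ + |001⟩. -/

import Mathlib

/-!
The only component of `W3` with first index `1` is `|100⟩`, so the operator `|0⟩⟨1|` on the first
qubit sends `W3` to `|000⟩`. Hence `ψ = (M ⊗ 1 ⊗ 1) W3` for `M = c₁ • 1 + c₀ • |0⟩⟨1|`, and since
`det M = c₁² ≠ 0`, the local operator `M⁻¹ ⊗ 1 ⊗ 1` takes `ψ` back to `W3`.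
-/

/-- The three-qubit W state `|100⟩ + |010⟩ + |001⟩`. -/
noncomputable def W3 : Fin 2 × Fin 2 × Fin 2 → ℂ :=
  fun x => if x = (1, 0, 0) ∨ x = (0, 1, 0) ∨ x = (0, 0, 1) then 1 else 0

open Matrix Kronecker

section LocalOperators

variable {R l m n l' m' n' : Type*} [Fintype l'] [Fintype m'] [Fintype n']

theorem Matrix.kronecker_kronecker_mulVec_apply [CommSemiring R] (A : Matrix l l' R)
    (B : Matrix m m' R) (C : Matrix n n' R) (ψ : l' × m' × n' → R) (i : l) (j : m) (k : n) :
    ((A ⊗ₖ (B ⊗ₖ C)) *ᵥ ψ) (i, j, k) =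
      ∑ a, ∑ b, ∑ c, A i a * B j b * C k c * ψ (a, b, c) := by
  simp only [mulVec, dotProduct, Fintype.sum_prod_type, kronecker_apply, mul_assoc]

theorem Matrix.nonsing_inv_kronecker_kronecker_mulVec_cancel [CommRing R]
    [DecidableEq l'] [DecidableEq m'] [DecidableEq n']
    {A : Matrix l' l' R} {B : Matrix m' m' R} {C : Matrix n' n' R}
    (hA : IsUnit A.det) (hB : IsUnit B.det) (hC : IsUnit C.det) (ψ : l' × m' × n' → R) :
    (A⁻¹ ⊗ₖ (B⁻¹ ⊗ₖ C⁻¹)) *ᵥ ((A ⊗ₖ (B ⊗ₖ C)) *ᵥ ψ) = ψ := by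
  rw [mulVec_mulVec, ← mul_kronecker_mul, ← mul_kronecker_mul, nonsing_inv_mul _ hA,
    nonsing_inv_mul _ hB, nonsing_inv_mul _ hC, one_kronecker_one, one_kronecker_one,
    one_mulVec]

end LocalOperators

theorem kronecker_one_one_mulVec_W3_apply (c₀ c₁ : ℂ) (x : Fin 2 × Fin 2 × Fin 2) :
    ((!![c₁, c₀; 0, c₁] ⊗ₖ ((1 : Matrix (Fin 2) (Fin 2) ℂ) ⊗ₖ 1)) *ᵥ W3) x =
      if x = (0, 0, 0) then c₀
        else if x = (1, 0, 0) ∨ x = (0, 1, 0) ∨ x = (0, 0, 1) then c₁ else 0 := by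
  obtain ⟨i, j, k⟩ := x
  rw [kronecker_kronecker_mulVec_apply]
  fin_cases i <;> fin_cases j <;> fin_cases k <;> simp [W3, Fin.sum_univ_two, one_apply]

/-- For `c₁ ≠ 0`, the state `c₀|000⟩ + c₁(|100⟩ + |010⟩ + |001⟩)` is
SLOCC-equivalent to the W state. -/
theorem c0_plus_c1_w_slocc_equiv_w (c₀ c₁ : ℂ) (hc₁ : c₁ ≠ 0)
    (ψ : Fin 2 × Fin 2 × Fin 2 → ℂ)
    (hψ : ∀ x : Fin 2 × Fin 2 × Fin 2,
      ψ x = if x = (0, 0, 0) then c₀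
        else if x = (1, 0, 0) ∨ x = (0, 1, 0) ∨ x = (0, 0, 1) then c₁ else 0) :
    ∃ A₁ A₂ A₃ : Matrix (Fin 2) (Fin 2) ℂ,
      IsUnit A₁ ∧ IsUnit A₂ ∧ IsUnit A₃ ∧
      ∀ i j k : Fin 2,
        W3 (i, j, k) =
          ∑ a : Fin 2, ∑ b : Fin 2, ∑ c : Fin 2,
            A₁ i a * A₂ j b * A₃ k c * ψ (a, b, c) := by
  set M : Matrix (Fin 2) (Fin 2) ℂ := !![c₁, c₀; 0, c₁]
  have hM : IsUnit M.det := by simp [M, det_fin_two, hc₁]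
  have hψM : ψ = (M ⊗ₖ (1 ⊗ₖ 1)) *ᵥ W3 :=
    funext fun x => (hψ x).trans (kronecker_one_one_mulVec_W3_apply c₀ c₁ x).symm
  have hW3 := nonsing_inv_kronecker_kronecker_mulVec_cancel (B := 1) (C := 1) hM
    (by simp) (by simp) W3
  rw [← hψM, inv_one] at hW3
  refine ⟨M⁻¹, 1, 1, isUnit_nonsing_inv_iff.2 ((isUnit_iff_isUnit_det M).2 hM), isUnit_one,
    isUnit_one, fun i j k => ?_⟩
  rw [← kronecker_kronecker_mulVec_apply, hW3]
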